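/- Let R be a nilpotent operator on a finite-dimensional complex normed vector space with R^N = 0, and T = 1 + R. Then for every vector v, the sequence (binomial n (N-1))⁻¹ • T^n v converges to R^{N-1} v as n → ∞. -/

import Mathlib

/-!
Since `R ^ N = 0`, the binomial theorem gives `T ^ n = ∑_{k < N} C(n, k) • R ^ k`. Dividing by
`C(n, N - 1)`, the top coefficient becomes `1` once `n ≥ N - 1`, while each lower coefficient
`C(n, k) / C(n, N - 1)` tends to `0`, being a product of ratios
`C(n, j) / C(n, j + 1) = (j + 1) / (n - j)`.
-/

open Filter Finset Topology

theorem one_add_pow_eq_sum_range_of_pow_eq_zero {A : Type*} [Semiring A] {x : A} {N : ℕ}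
    (hx : x ^ N = 0) (n : ℕ) :
    (1 + x) ^ n = ∑ k ∈ range N, n.choose k • x ^ k := by
  rw [add_comm, (Commute.one_right x).add_pow]
  simp_rw [one_pow, mul_one, ← Nat.cast_comm, ← nsmul_eq_mul]
  rcases le_total N (n + 1) with h | h
  · refine (sum_subset (range_subset_range.2 h) fun k _ hk => ?_).symm
    rw [pow_eq_zero_of_le (by simpa using hk) hx, smul_zero]
  · refine sum_subset (range_subset_range.2 h) fun k _ hk => ?_
    rw [Nat.choose_eq_zero_of_lt (by simp at hk; omega), zero_smul]

theorem Nat.tendsto_choose_div_choose_succ (m : ℕ) :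
    Tendsto (fun n : ℕ => (n.choose m : ℝ) / n.choose (m + 1)) atTop (𝓝 0) := by
  have hratio : ∀ᶠ n : ℕ in atTop, (m + 1 : ℝ) / (n - m) = n.choose m / n.choose (m + 1) := by
    filter_upwards [eventually_gt_atTop m] with n hn
    have hpos : (0 : ℝ) < n.choose (m + 1) := by exact_mod_cast Nat.choose_pos hn
    rw [div_eq_div_iff (by rw [sub_ne_zero]; exact_mod_cast hn.ne') hpos.ne']
    have key := congrArg (Nat.cast : ℕ → ℝ) (Nat.choose_succ_right_eq n m)
    push_cast [Nat.cast_sub hn.le] at key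
    linarith
  refine Tendsto.congr' hratio (tendsto_const_nhds.div_atTop ?_)
  exact tendsto_atTop_add_const_right _ _ tendsto_natCast_atTop_atTop

theorem Nat.tendsto_choose_div_choose_of_lt {k m : ℕ} (h : k < m) :
    Tendsto (fun n : ℕ => (n.choose k : ℝ) / n.choose m) atTop (𝓝 0) := by
  induction m, h using Nat.le_induction with
  | base => exact tendsto_choose_div_choose_succ k
  | succ m _ ih =>
    have hcancel : ∀ᶠ n : ℕ in atTop,
        (n.choose k : ℝ) / n.choose m * (n.choose m / n.choose (m + 1))
          = n.choose k / n.choose (m + 1) := by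
      filter_upwards [eventually_ge_atTop m] with n hn
      rw [div_mul_div_cancel₀ (by exact_mod_cast (Nat.choose_pos hn).ne')]
    simpa using (ih.mul (tendsto_choose_div_choose_succ m)).congr' hcancel

theorem RCLike.tendsto_choose_div_choose_of_lt {𝕜 : Type*} [RCLike 𝕜] {k m : ℕ} (h : k < m) :
    Tendsto (fun n : ℕ => (n.choose k : 𝕜) / n.choose m) atTop (𝓝 0) := by
  simpa [Function.comp_def] using
    ((RCLike.continuous_ofReal (K := 𝕜)).tendsto 0).comp (Nat.tendsto_choose_div_choose_of_lt h)

theorem tendsto_inv_choose_smul_one_add_pow_apply {𝕜 V : Type*} [RCLike 𝕜]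
    [NormedAddCommGroup V] [NormedSpace 𝕜 V] {R : V →ₗ[𝕜] V} {M : ℕ} (hR : R ^ (M + 1) = 0)
    (v : V) :
    Tendsto (fun n : ℕ => (n.choose M : 𝕜)⁻¹ • ((1 + R) ^ n) v) atTop (𝓝 ((R ^ M) v)) := by
  have hsplit : ∀ᶠ n : ℕ in atTop, (n.choose M : 𝕜)⁻¹ • ((1 + R) ^ n) v
      = ∑ k ∈ range M, ((n.choose k : 𝕜) / n.choose M) • (R ^ k) v + (R ^ M) v := by
    filter_upwards [eventually_ge_atTop M] with n hn
    have hc : (n.choose M : 𝕜) ≠ 0 := by exact_mod_cast (Nat.choose_pos hn).ne'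
    simp [one_add_pow_eq_sum_range_of_pow_eq_zero hR, sum_range_succ, smul_sum, smul_smul,
      ← Nat.cast_smul_eq_nsmul 𝕜, div_eq_inv_mul, hc]
  have hlower : Tendsto (fun n : ℕ => ∑ k ∈ range M, ((n.choose k : 𝕜) / n.choose M) • (R ^ k) v)
      atTop (𝓝 0) := by
    simpa using tendsto_finsetSum (range M) fun k hk =>
      (RCLike.tendsto_choose_div_choose_of_lt (𝕜 := 𝕜) (mem_range.1 hk)).smul_const ((R ^ k) v)
  simpa using (hlower.add_const ((R ^ M) v)).congr' (hsplit.mono fun _ h => h.symm)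

theorem stmt_3_general {V : Type*} [NormedAddCommGroup V] [NormedSpace ℂ V]
    (N : ℕ) (hN : 1 ≤ N) (R : V →ₗ[ℂ] V) (hR : R ^ N = 0)
    (T : V →ₗ[ℂ] V) (hT : T = 1 + R) (v : V) :
    Filter.Tendsto (fun n : ℕ => ((n.choose (N - 1) : ℂ))⁻¹ • (T ^ n) v)
      Filter.atTop (nhds ((R ^ (N - 1)) v)) := by
  obtain ⟨M, rfl⟩ := Nat.exists_eq_add_of_le' hN
  subst hT
  simpa using tendsto_inv_choose_smul_one_add_pow_apply hR v

theorem stmt_3 {V : Type*} [NormedAddCommGroup V] [NormedSpace ℂ V] [FiniteDimensional ℂ V]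
    (N : ℕ) (hN : 1 ≤ N) (R : V →ₗ[ℂ] V) (hR : R ^ N = 0)
    (T : V →ₗ[ℂ] V) (hT : T = 1 + R) (v : V) :
    Filter.Tendsto (fun n : ℕ => ((n.choose (N - 1) : ℂ))⁻¹ • (T ^ n) v)
      Filter.atTop (nhds ((R ^ (N - 1)) v)) :=
  stmt_3_general N hN R hR T hT v
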